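/- Let k be a field and S = k[x₁, …, xₙ]. Let M be a matroid on {1, …, n} with base family 𝓑, and let ℓ ≥ 0 be such that S_ℓ(𝓑) is nonempty. Then the ideal J_ℓ ⊆ S generated by the squarefree monomials { x_U = ∏_{i ∈ U} x_i : U ∈ S_ℓ(𝓑) } (the ideal generated by the ℓ-th multigraded shifts of the matroidal ideal of M) is a matroidal ideal: there exists a matroid M' on {1, …, n} with base family 𝓑' such that J_ℓ is the ideal generated by { x_D : D ∈ 𝓑' }. -/

import Mathlib

/-- Two sets are *adjacent* if each has exactly one element outside the other. -/
def AdjacentSets {α : Type*} (B C : Set α) : Prop :=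
  (B \ C).ncard = 1 ∧ (C \ B).ncard = 1

/-- The *adjacency family* of a family of sets: all unions of adjacent pairs of members. -/
def adjFam {α : Type*} (𝓕 : Set (Set α)) : Set (Set α) :=
  {U | ∃ B ∈ 𝓕, ∃ C ∈ 𝓕, AdjacentSets B C ∧ U = B ∪ C}

/-- For a family `𝓑` of subsets of `{1, …, n}` (ordered so that `i >_lex j ↔ i < j` as
integers) and `B ∈ 𝓑`, the set `set(B)` consists of all `e ∉ B` for which there exists
`t ∈ B` with `e >_lex t` (that is, `e < t`) and `(B \ {t}) ∪ {e} ∈ 𝓑`. -/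
def lexSet {n : ℕ} (𝓑 : Set (Set (Fin n))) (B : Set (Fin n)) : Set (Fin n) :=
  {e | e ∉ B ∧ ∃ t ∈ B, e < t ∧ insert e (B \ {t}) ∈ 𝓑}

/-- `S_ℓ(𝓑) = { B ∪ E : B ∈ 𝓑, E ⊆ set(B), |E| = ℓ }`, the family of supports of the
`ℓ`-th multigraded shifts of the matroidal ideal of `𝓑`. -/
def shiftFam {n : ℕ} (𝓑 : Set (Set (Fin n))) (ℓ : ℕ) : Set (Set (Fin n)) :=
  {U | ∃ B ∈ 𝓑, ∃ E, E ⊆ lexSet 𝓑 B ∧ E.ncard = ℓ ∧ U = B ∪ E}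

/-- The squarefree monomial `x_U = ∏_{i ∈ U} x_i` in `k[x₁, …, xₙ]` associated to a
subset `U ⊆ {1, …, n}`. -/
noncomputable def baseMonomial (k : Type*) [CommSemiring k] {n : ℕ} (U : Set (Fin n)) :
    MvPolynomial (Fin n) k :=
  ∏ i ∈ U.toFinite.toFinset, MvPolynomial.X i

/-!
A set `U` belongs to `S_ℓ(𝓑)` exactly when it is a spanning set of nonloops of `M` with
`|U| = rank M + ℓ`. For the converse, take the colex-largest base `B ⊆ U`: each `e ∈ U \ B`
is a nonloop, hence can be exchanged into `B` against some `t ∈ B`, and maximality of `B`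
forces `e < t`, so `U \ B ⊆ set(B)`. In a finite matroid, the spanning subsets of a fixed set
with a fixed size satisfy the base exchange axiom (if `X \ {e}` no longer spans, exchange `e`
against an element of `Y` outside `cl (X \ {e})`), so they are the bases of a matroid `M'`,
and `J_ℓ` is the matroidal ideal of `M'`.
-/

open Set

open Finset.Colex in
lemma toColex_lt_toColex_insert_sdiff {α : Type*} [LinearOrder α] [Finite α] {B : Set α}
    {e t : α} (ht : t ∈ B) (he : e ∉ B) (hte : t < e) :
    toColex B.toFinite.toFinset < toColex (insert e (B \ {t})).toFinite.toFinset := by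
  have hB : B.toFinite.toFinset = insert t (B.toFinite.toFinset.erase t) := by
    rw [Finset.insert_erase (by simpa using ht)]
  have hB' : (insert e (B \ {t})).toFinite.toFinset = insert e (B.toFinite.toFinset.erase t) := by
    ext; simp [and_comm]
  rw [hB, hB', insert_lt_insert (by simp) (by simp [he])]
  exact hte

namespace Matroid

variable {α : Type*} {M : Matroid α} {B U X Y : Set α} {e : α}

lemma IsBase.exists_isBase_insert_sdiff_of_isNonloop (hB : M.IsBase B) (he : M.IsNonloop e)
    (heB : e ∉ B) : ∃ t ∈ B, M.IsBase (insert e (B \ {t})) := by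
  have hspan : M.Spanning (insert e B) :=
    hB.spanning.superset (subset_insert e B) (insert_subset he.mem_ground hB.subset_ground)
  obtain ⟨B', hB', heB', hB'B⟩ :=
    he.indep.exists_isBase_subset_spanning hspan (singleton_subset_iff.2 (mem_insert e B))
  obtain ⟨t, ht⟩ : (B \ B').Nonempty := by
    rw [nonempty_iff_ne_empty, Ne, sdiff_eq_empty]
    intro hBB'
    exact heB (hB.eq_of_subset_isBase hB' hBB' ▸ heB' rfl)
  obtain ⟨y, ⟨hyB', hyB⟩, hbase⟩ := hB.exchange hB' ht
  obtain rfl : y = e := (hB'B hyB').resolve_right hyB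
  exact ⟨t, ht.1, hbase⟩

lemma Spanning.exists_insert_sdiff_spanning (hX : M.Spanning X) (hY : M.Spanning Y)
    (he : e ∈ X \ Y) (hXe : ¬ M.Spanning (X \ {e})) :
    ∃ f ∈ Y \ X, M.Spanning (insert f (X \ {e})) := by
  have hXeE : X \ {e} ⊆ M.E := sdiff_subset.trans hX.subset_ground
  obtain ⟨f, hfY, hfcl⟩ := not_subset.1 fun hYcl : Y ⊆ M.closure (X \ {e}) ↦ hXe <|
    (spanning_iff_ground_subset_closure hXeE).2 <|
      hY.closure_eq ▸ M.closure_subset_closure_of_subset_closure hYcl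
  have hfX : f ∉ X := fun hfX ↦
    hfcl (M.subset_closure _ hXeE ⟨hfX, fun hfe : f = e ↦ he.2 (hfe ▸ hfY)⟩)
  have hecl : e ∈ M.closure (insert f (X \ {e})) := by
    refine (closure_exchange ⟨?_, hfcl⟩).1
    rw [insert_sdiff_singleton, insert_eq_of_mem he.1, hX.closure_eq]
    exact hY.subset_ground hfY
  have hXfE : insert f (X \ {e}) ⊆ M.E := insert_subset (hY.subset_ground hfY) hXeE
  refine ⟨f, ⟨hfY, hfX⟩, (spanning_iff_ground_subset_closure hXfE).2 ?_⟩
  rw [← hX.closure_eq]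
  refine M.closure_subset_closure_of_subset_closure fun x hx ↦ ?_
  by_cases hxe : x = e
  · exact hxe ▸ hecl
  · exact M.subset_closure _ hXfE (mem_insert_of_mem _ ⟨hx, hxe⟩)

lemma exchangeProperty_spanning_subset_encard [M.Finite] (S : Set α) (k : ℕ∞) :
    ExchangeProperty (fun U ↦ M.Spanning U ∧ U ⊆ S ∧ U.encard = k) := by
  rintro X Y ⟨hX, hXS, hXk⟩ ⟨hY, hYS, hYk⟩ e he
  have hexch : ∀ f ∈ Y \ X, M.Spanning (insert f (X \ {e})) →
      M.Spanning (insert f (X \ {e})) ∧ insert f (X \ {e}) ⊆ S ∧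
        (insert f (X \ {e})).encard = k := fun f hf hspan ↦
    ⟨hspan, insert_subset (hYS hf.1) (sdiff_subset.trans hXS),
      by rw [encard_exchange hf.2 he.1, hXk]⟩
  by_cases hXe : M.Spanning (X \ {e})
  · obtain ⟨f, hf⟩ : (Y \ X).Nonempty := by
      rw [nonempty_iff_ne_empty, Ne, sdiff_eq_empty]
      intro hYX
      have hYfin : Y.Finite := M.ground_finite.subset hY.subset_ground
      exact he.2 (hYfin.eq_of_subset_of_encard_le hYX (hXk.trans hYk.symm).le ▸ he.1)
    refine ⟨f, hf, hexch f hf (hXe.superset (subset_insert _ _) ?_)⟩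
    exact insert_subset (hY.subset_ground hf.1) (sdiff_subset.trans hX.subset_ground)
  · obtain ⟨f, hf, hspan⟩ := hX.exists_insert_sdiff_spanning hY he hXe
    exact ⟨f, hf, hexch f hf hspan⟩

lemma exists_matroid_isBase_iff_spanning_subset_encard [Finite α] (M : Matroid α) (S : Set α)
    (k : ℕ∞) (h : ∃ U, M.Spanning U ∧ U ⊆ S ∧ U.encard = k) :
    ∃ M' : Matroid α, M'.E = univ ∧
      ∀ U, M'.IsBase U ↔ M.Spanning U ∧ U ⊆ S ∧ U.encard = k :=
  ⟨Matroid.ofIsBaseOfFinite finite_univ _ h (M.exchangeProperty_spanning_subset_encard S k)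
    (fun U _ ↦ subset_univ U), rfl, fun _ ↦ Iff.rfl⟩

lemma Spanning.exists_isBase_subset_forall_exchange [LinearOrder α] [Finite α]
    (hU : M.Spanning U) : ∃ B, M.IsBase B ∧ B ⊆ U ∧
      ∀ e ∈ U \ B, ∀ t ∈ B, M.IsBase (insert e (B \ {t})) → e < t := by
  obtain ⟨B, ⟨hB, hBU⟩, hmax⟩ := exists_max_image {B | M.IsBase B ∧ B ⊆ U}
    (fun B ↦ toColex B.toFinite.toFinset) (toFinite _) hU.exists_isBase_subset
  refine ⟨B, hB, hBU, fun e ⟨heU, heB⟩ t htB hbase ↦ ?_⟩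
  refine (lt_or_gt_of_ne fun het : e = t ↦ heB (het ▸ htB)).resolve_right fun hte ↦ ?_
  exact (hmax _ ⟨hbase, insert_subset heU (sdiff_subset.trans hBU)⟩).not_gt
    (toColex_lt_toColex_insert_sdiff htB heB hte)

end Matroid

lemma mem_shiftFam_iff {n : ℕ} (M : Matroid (Fin n)) (ℓ : ℕ) (U : Set (Fin n)) :
    U ∈ shiftFam {B | M.IsBase B} ℓ ↔
      M.Spanning U ∧ U ⊆ {e | M.IsNonloop e} ∧ U.encard = M.eRank + ℓ := by
  constructor
  · rintro ⟨B, hB, E, hE, rfl, rfl⟩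
    have hBE : Disjoint B E := disjoint_right.2 fun e he ↦ (hE he).1
    have hEnl : E ⊆ {e | M.IsNonloop e} := fun e he ↦
      have ⟨_, _, _, _, hbase⟩ := hE he
      hbase.indep.isNonloop_of_mem (mem_insert e _)
    refine ⟨hB.spanning.superset subset_union_left
        (union_subset hB.subset_ground fun e he ↦ (hEnl he).mem_ground),
      union_subset (fun e he ↦ hB.indep.isNonloop_of_mem he) hEnl, ?_⟩
    rw [encard_union_eq hBE, hB.encard_eq_eRank, E.toFinite.cast_ncard_eq]
  · rintro ⟨hU, hUnl, hUcard⟩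
    obtain ⟨B, hB, hBU, hlt⟩ := hU.exists_isBase_subset_forall_exchange
    refine ⟨B, hB, U \ B, fun e he ↦ ?_, ?_, (union_sdiff_cancel hBU).symm⟩
    · obtain ⟨t, htB, hbase⟩ := hB.exists_isBase_insert_sdiff_of_isNonloop (hUnl he.1) he.2
      exact ⟨he.2, t, htB, hlt e he t htB hbase, hbase⟩
    · have hsum := encard_sdiff_add_encard_of_subset hBU
      rw [hUcard, hB.encard_eq_eRank, add_comm] at hsum
      rw [ncard_def, WithTop.add_left_cancel (M.eRank_ne_top_iff.2 inferInstance) hsum,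
        ENat.toNat_natCast]

theorem multigraded_shift_ideal_matroidal_general (k : Type*) [Field k] {n : ℕ}
    (M : Matroid (Fin n))
    (𝓑 : Set (Set (Fin n))) (h𝓑 : 𝓑 = {B | M.IsBase B})
    (ℓ : ℕ) (hne : (shiftFam 𝓑 ℓ).Nonempty)
    (J : Ideal (MvPolynomial (Fin n) k))
    (hJ : J = Ideal.span {p | ∃ U ∈ shiftFam 𝓑 ℓ, p = baseMonomial k U}) :
    ∃ M' : Matroid (Fin n), M'.E = Set.univ ∧
      J = Ideal.span {p | ∃ D ∈ {B | M'.IsBase B}, p = baseMonomial k D} := by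
  subst h𝓑 hJ
  obtain ⟨M', hM'E, hM'⟩ := M.exists_matroid_isBase_iff_spanning_subset_encard
    {e | M.IsNonloop e} (M.eRank + ℓ) (by simpa only [Set.Nonempty, mem_shiftFam_iff] using hne)
  refine ⟨M', hM'E, ?_⟩
  simp only [Set.mem_ofPred_eq, hM', ← mem_shiftFam_iff]

/-- Let `k` be a field and `S = k[x₁, …, xₙ]`.  Let `M` be a matroid on
`{1, …, n}` with base family `𝓑`, and let `ℓ ≥ 0` be such that `S_ℓ(𝓑)` is nonempty.
Then the ideal `J_ℓ ⊆ S` generated by the squarefree monomials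
`{ x_U : U ∈ S_ℓ(𝓑) }` (the ideal generated by the `ℓ`-th multigraded shifts of the
matroidal ideal of `M`) is a matroidal ideal: there is a matroid `M'` on `{1, …, n}`
with base family `𝓑'` such that `J_ℓ` is the ideal generated by `{ x_D : D ∈ 𝓑' }`. -/
theorem multigraded_shift_ideal_matroidal (k : Type*) [Field k] {n : ℕ}
    (M : Matroid (Fin n)) (hE : M.E = Set.univ)
    (𝓑 : Set (Set (Fin n))) (h𝓑 : 𝓑 = {B | M.IsBase B})
    (ℓ : ℕ) (hne : (shiftFam 𝓑 ℓ).Nonempty)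
    (J : Ideal (MvPolynomial (Fin n) k))
    (hJ : J = Ideal.span {p | ∃ U ∈ shiftFam 𝓑 ℓ, p = baseMonomial k U}) :
    ∃ M' : Matroid (Fin n), M'.E = Set.univ ∧
      J = Ideal.span {p | ∃ D ∈ {B | M'.IsBase B}, p = baseMonomial k D} :=
  multigraded_shift_ideal_matroidal_general k M 𝓑 h𝓑 ℓ hne J hJ
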